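/- arXiv:2110.13649 — 3 statements merged into one kernel-verified Lean document; each statement's English description precedes it below -/
import Mathlib

section
/- For the Borel distribution with parameter μ ∈ (0,1), the probabilities sum to one: ∑_{n≥1} e^{-μn} (μn)^{n-1}/n! = 1. -/
/-!
With `x = μ e^{-μ}` the sum is `e^{-μ} B(x)`, where `B(x) = ∑ (m+1)^m x^m / (m+1)!`, so the
claim is `B(μ e^{-μ}) = e^μ`. For small `μ`, expand every factor `e^{-(m+1)μ}` into its
exponential series and regroup the absolutely convergent double series by total degree: the
coefficient of `μ^(N+1)` is an `(N+1)`-st finite difference of `k ↦ k^N`, which vanishes for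
`N ≥ 1`. Since `B` has radius of convergence at least `1/e` and `μ e^{-μ} < 1/e` for
`μ ∈ (0,1)`, both sides are real-analytic on `(0,1)`, and the identity extends to the whole
interval by analytic continuation.
-/

open Finset Nat Real Filter Topology FormalMultilinearSeries

theorem sum_range_neg_one_pow_mul_choose_succ_mul_pow {R : Type*} [CommRing R] (N : ℕ) :
    ∑ m ∈ range (N + 1), (-1 : R) ^ (N - m) * ((N + 1).choose (m + 1)) * ((m : R) + 1) ^ N =
      if N = 0 then 1 else 0 := by
  have h := congrFun (fwdDiff_iter_pow_eq_zero_of_lt (R := R) (Nat.lt_succ_self N)) 0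
  rw [fwdDiff_iter_eq_sum_shift, sum_range_succ'] at h
  simp only [zsmul_eq_mul, nsmul_eq_mul, Int.cast_mul, Int.cast_pow, Int.cast_neg, Int.cast_one,
    Int.cast_natCast, zero_add, mul_one, Nat.cast_add, Nat.cast_one, Nat.cast_zero,
    Nat.choose_zero_right, Pi.zero_apply, Nat.succ_sub_succ, Nat.sub_zero] at h
  rw [eq_neg_of_add_eq_zero_left h]
  rcases N with _ | N <;> simp

theorem Summable.tsum_eq_tsum_sum_antidiagonal {α : Type*} [AddCommMonoid α] [TopologicalSpace α]
    [T3Space α] [ContinuousAdd α] {f : ℕ × ℕ → α} (hf : Summable f) :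
    ∑' p, f p = ∑' n, ∑ p ∈ antidiagonal n, f p := by
  rw [← HasAntidiagonal.sigmaAntidiagonalEquivProd.tsum_eq f]
  refine ((HasAntidiagonal.sigmaAntidiagonalEquivProd.summable_iff.mpr hf).tsum_sigma'
    fun n ↦ (hasSum_fintype _).summable).trans (tsum_congr fun n ↦ ?_)
  rw [tsum_fintype]
  exact sum_coe_sort (antidiagonal n) f

lemma mul_exp_add_one_lt_one {t : ℝ} (ht0 : 0 ≤ t) (ht : t < 1 / 8) : t * exp (t + 1) < 1 := by
  have he : exp (t + 1) < exp 1 * exp 1 := by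
    rw [← exp_add]; exact exp_lt_exp.mpr (by linarith)
  nlinarith [exp_one_lt_d9, exp_pos 1]

lemma mul_exp_neg_lt_exp_neg_one {x : ℝ} (hx : x ≠ 1) : x * exp (-x) < exp (-1) := by
  have h : x < exp (x - 1) := by simpa using add_one_lt_exp (sub_ne_zero.mpr hx)
  calc x * exp (-x) < exp (x - 1) * exp (-x) := by gcongr
    _ = exp (-1) := by rw [← exp_add]; ring_nf

noncomputable def borelCoeff (m : ℕ) : ℝ := ((m : ℝ) + 1) ^ m / (m + 1)!

lemma borelCoeff_nonneg (m : ℕ) : 0 ≤ borelCoeff m := by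
  unfold borelCoeff; positivity

lemma borelCoeff_le_exp (m : ℕ) : borelCoeff m ≤ exp (m + 1) := by
  have hpow : ((m : ℝ) + 1) ^ m ≤ ((m : ℝ) + 1) ^ (m + 1) :=
    pow_le_pow_right₀ (le_add_of_nonneg_left m.cast_nonneg) m.le_succ
  calc borelCoeff m ≤ ((m : ℝ) + 1) ^ (m + 1) / (m + 1)! := by
        unfold borelCoeff; gcongr
    _ ≤ exp (m + 1) := pow_div_factorial_le_exp _ (by positivity) (m + 1)

/-- The rows of `borelDoubleTerm t (-t)` expand the factors `e^{-(m+1)t}`;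
`borelDoubleTerm t t` is its absolute value. -/
noncomputable def borelDoubleTerm (t s : ℝ) (p : ℕ × ℕ) : ℝ :=
  borelCoeff p.1 * t ^ (p.1 + 1) * (((p.1 : ℝ) + 1) * s) ^ p.2 / p.2 !

lemma borelDoubleTerm_nonneg {t s : ℝ} (ht : 0 ≤ t) (hs : 0 ≤ s) (p : ℕ × ℕ) :
    0 ≤ borelDoubleTerm t s p := by
  unfold borelDoubleTerm; have := borelCoeff_nonneg p.1; positivity

lemma hasSum_borelDoubleTerm_row (t s : ℝ) (m : ℕ) :
    HasSum (fun j ↦ borelDoubleTerm t s (m, j))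
      (borelCoeff m * t ^ (m + 1) * exp (((m : ℝ) + 1) * s)) := by
  have h := (exp_eq_exp_ℝ ▸ NormedSpace.expSeries_div_hasSum_exp (((m : ℝ) + 1) * s)).mul_left
    (borelCoeff m * t ^ (m + 1))
  simpa only [borelDoubleTerm, mul_div_assoc] using h

lemma summable_borelDoubleTerm {t : ℝ} (ht0 : 0 ≤ t) (ht : t * exp (t + 1) < 1) :
    Summable (borelDoubleTerm t t) := by
  refine (summable_prod_of_nonneg (borelDoubleTerm_nonneg ht0 ht0)).mpr
    ⟨fun m ↦ (hasSum_borelDoubleTerm_row t t m).summable, ?_⟩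
  simp_rw [(hasSum_borelDoubleTerm_row t t _).tsum_eq]
  refine ((summable_nat_add_iff 1).mpr (summable_geometric_of_lt_one (by positivity) ht))
    |>.of_nonneg_of_le (fun m ↦ by have := borelCoeff_nonneg m; positivity) fun m ↦ ?_
  calc borelCoeff m * t ^ (m + 1) * exp (((m : ℝ) + 1) * t)
      ≤ exp ((m : ℝ) + 1) * t ^ (m + 1) * exp (((m : ℝ) + 1) * t) := by
        gcongr; exact borelCoeff_le_exp m
    _ = t ^ (m + 1) * exp ((m + 1 : ℕ) * (t + 1)) := by
        rw [mul_right_comm, ← exp_add]; push_cast; ring_nf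
    _ = (t * exp (t + 1)) ^ (m + 1) := by rw [exp_nat_mul, mul_pow]

lemma abs_borelDoubleTerm_neg {t : ℝ} (ht : 0 ≤ t) (p : ℕ × ℕ) :
    |borelDoubleTerm t (-t) p| = borelDoubleTerm t t p := by
  rw [show borelDoubleTerm t (-t) p = (-1) ^ p.2 * borelDoubleTerm t t p by
      unfold borelDoubleTerm; rw [mul_neg, neg_pow]; ring,
    abs_mul, abs_pow, abs_neg, abs_one, one_pow, one_mul,
    abs_of_nonneg (borelDoubleTerm_nonneg ht ht p)]

lemma borelDoubleTerm_neg_eq (t : ℝ) (m j : ℕ) :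
    borelDoubleTerm t (-t) (m, j) = t ^ (m + j + 1) / (m + j + 1)! *
      ((-1) ^ j * ((m + j + 1).choose (m + 1)) * ((m : ℝ) + 1) ^ (m + j)) := by
  have hchoose : ((m + j + 1).choose (m + 1) : ℝ) * (m + 1)! * j ! = (m + j + 1)! := by
    have h := Nat.add_choose_mul_factorial_mul_factorial j (m + 1)
    rw [show j + (m + 1) = m + j + 1 by ring] at h
    rw [← h]; push_cast; ring
  have hchoose_ne : ((m + j + 1).choose (m + 1) : ℝ) ≠ 0 :=
    Nat.cast_ne_zero.mpr (Nat.choose_pos (by omega)).ne'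
  unfold borelDoubleTerm borelCoeff
  rw [← hchoose, mul_neg, neg_pow, mul_pow]
  field_simp
  ring

lemma sum_antidiagonal_borelDoubleTerm_neg (t : ℝ) (N : ℕ) :
    ∑ p ∈ antidiagonal N, borelDoubleTerm t (-t) p = if N = 0 then t else 0 := by
  calc ∑ p ∈ antidiagonal N, borelDoubleTerm t (-t) p
      = t ^ (N + 1) / (N + 1)! *
          ∑ p ∈ antidiagonal N,
            (-1) ^ p.2 * ((N + 1).choose (p.1 + 1)) * ((p.1 : ℝ) + 1) ^ N := by
        rw [mul_sum]
        refine sum_congr rfl fun p hp ↦ ?_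
        rw [← mem_antidiagonal.mp hp]
        exact borelDoubleTerm_neg_eq t p.1 p.2
    _ = t ^ (N + 1) / (N + 1)! * if N = 0 then 1 else 0 := by
        rw [Nat.sum_antidiagonal_eq_sum_range_succ_mk,
          sum_range_neg_one_pow_mul_choose_succ_mul_pow]
    _ = if N = 0 then t else 0 := by split_ifs with h <;> simp [h]

theorem tsum_borelCoeff_mul_pow_eq_exp {t : ℝ} (ht0 : 0 < t) (ht : t * exp (t + 1) < 1) :
    ∑' m, borelCoeff m * (t * exp (-t)) ^ m = exp t := by
  have hsum : Summable (borelDoubleTerm t (-t)) :=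
    (summable_borelDoubleTerm ht0.le ht).of_norm_bounded fun p ↦
      (abs_borelDoubleTerm_neg ht0.le p).le
  have htotal : HasSum (borelDoubleTerm t (-t)) t := by
    rw [hsum.hasSum_iff, hsum.tsum_eq_tsum_sum_antidiagonal]
    simp_rw [sum_antidiagonal_borelDoubleTerm_neg]
    exact (hasSum_ite_eq 0 t).tsum_eq
  have hrows := htotal.prod_fiberwise (hasSum_borelDoubleTerm_row t (-t))
  have hx : t * exp (-t) ≠ 0 := by positivity
  have hrow_eq : (fun m : ℕ ↦ borelCoeff m * t ^ (m + 1) * exp (((m : ℝ) + 1) * -t)) =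
      fun m ↦ t * exp (-t) * (borelCoeff m * (t * exp (-t)) ^ m) := by
    ext m
    rw [show ((m : ℝ) + 1) * -t = (m + 1 : ℕ) * -t by push_cast; ring, exp_nat_mul]
    ring
  calc ∑' m, borelCoeff m * (t * exp (-t)) ^ m
      = (t * exp (-t))⁻¹ * ∑' m, t * exp (-t) * (borelCoeff m * (t * exp (-t)) ^ m) := by
        rw [tsum_mul_left, inv_mul_cancel_left₀ hx]
    _ = (t * exp (-t))⁻¹ * t := by rw [← hrow_eq, hrows.tsum_eq]
    _ = exp t := by rw [exp_neg]; field_simp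

lemma le_radius_ofScalars_borelCoeff :
    ENNReal.ofReal (exp (-1)) ≤ (ofScalars ℝ borelCoeff).radius := by
  refine le_radius_of_bound _ (exp 1) fun n ↦ ?_
  rw [ofScalars_norm, Real.norm_of_nonneg (borelCoeff_nonneg n),
    Real.coe_toNNReal _ (exp_pos _).le]
  calc borelCoeff n * exp (-1) ^ n ≤ exp (n + 1) * exp (-1) ^ n := by
        gcongr; exact borelCoeff_le_exp n
    _ = exp 1 := by rw [← exp_nat_mul, ← exp_add]; ring_nf

lemma analyticOnNhd_ofScalarsSum_borelCoeff :
    AnalyticOnNhd ℝ (ofScalarsSum (E := ℝ) borelCoeff)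
      (Metric.eball 0 (ENNReal.ofReal (exp (-1)))) :=
  ((ofScalars ℝ borelCoeff).hasFPowerSeriesOnBall
    ((ENNReal.ofReal_pos.mpr (exp_pos _)).trans_le le_radius_ofScalars_borelCoeff))
    |>.analyticOnNhd.mono (Metric.eball_subset_eball le_radius_ofScalars_borelCoeff)

theorem tsum_borelCoeff_mul_pow_eq_exp_of_mem_Ioo {μ : ℝ} (hμ : μ ∈ Set.Ioo 0 1) :
    ∑' m, borelCoeff m * (μ * exp (-μ)) ^ m = exp μ := by
  let F : ℝ → ℝ := fun x ↦ ofScalarsSum (E := ℝ) borelCoeff (x * exp (-x))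
  have hF : AnalyticOnNhd ℝ F (Set.Ioo 0 1) := fun x hx ↦ by
    refine (analyticOnNhd_ofScalarsSum_borelCoeff _ ?_).comp (by fun_prop)
    rw [Metric.mem_eball, edist_dist, ENNReal.ofReal_lt_ofReal_iff (exp_pos _), Real.dist_eq,
      sub_zero, abs_of_nonneg (by have := hx.1; positivity)]
    exact mul_exp_neg_lt_exp_neg_one hx.2.ne
  have hsmall : F =ᶠ[𝓝 (1 / 16)] exp :=
    eventually_of_mem
      (Ioo_mem_nhds (by norm_num : (0 : ℝ) < 1 / 16) (by norm_num : (1 / 16 : ℝ) < 1 / 8))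
      fun t ht ↦ by
        simpa [F, ofScalars_sum_eq] using
          tsum_borelCoeff_mul_pow_eq_exp ht.1 (mul_exp_add_one_lt_one ht.1.le ht.2)
  simpa [F, ofScalars_sum_eq] using
    hF.eqOn_of_preconnected_of_eventuallyEq (analyticOnNhd_rexp.mono (Set.subset_univ _))
      isPreconnected_Ioo (by norm_num : (1 / 16 : ℝ) ∈ Set.Ioo 0 1) hsmall hμ

/-- For the Borel distribution with parameter `μ ∈ (0,1)`, the probabilities
`P(X = n) = e^{-μn} (μn)^{n-1}/n!`, `n ≥ 1`, sum to one.
(The index `n ≥ 1` is written as `n = m + 1` with `m : ℕ`.) -/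
theorem borel_sum_eq_one (μ : ℝ) (hμ : μ ∈ Set.Ioo (0:ℝ) 1) :
    ∑' m : ℕ, Real.exp (-(μ * ((m:ℝ) + 1))) * (μ * ((m:ℝ) + 1)) ^ m /
      ((m + 1).factorial : ℝ) = 1 := by
  have hterm (m : ℕ) : exp (-(μ * ((m : ℝ) + 1))) * (μ * ((m : ℝ) + 1)) ^ m / (m + 1)! =
      exp (-μ) * (borelCoeff m * (μ * exp (-μ)) ^ m) := by
    rw [show -(μ * ((m : ℝ) + 1)) = -μ + m * -μ by ring, exp_add, exp_nat_mul, mul_pow,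
      borelCoeff]
    ring
  rw [tsum_congr hterm, tsum_mul_left, tsum_borelCoeff_mul_pow_eq_exp_of_mem_Ioo hμ, ← exp_add,
    neg_add_cancel, exp_zero]
end

section
/- Let Γ be the operator (Γf)(z) = a ∫_0^∞ f(z+y) e^{-by} dy with 0 < a < b. Then for f(x) = x^p e^{ηx} 1_{[0,t]}(x) with η < b, and z ∈ [0,t], the Neumann series satisfies ((I - Γ)^{-1} Γ f)(z) = ∑_{n≥1} (Γ^n f)(z) = a e^{ηz} ∫_0^{t-z} (z+y)^p e^{(η + a - b) y} dy. -/
/-!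
Induction on `m` gives `Γ^{m+1} f (z) = a^{m+1}/m! ∫_0^∞ f(z+u) u^m e^{-bu} du`: one more
application of `Γ` is a double integral over the triangle `0 < y < v`, and Fubini integrates out
`y`. For bounded `f`, `∫_0^∞ u^m e^{-bu} du = m!/b^{m+1}` makes the `L¹` norms of the terms
geometric with ratio `|a|/b < 1`, so sum and integral commute, and the exponential series gives
`∑_{m ≥ 0} Γ^{m+1} f (z) = a ∫_0^∞ f(z+u) e^{(a-b)u} du`. For `f = x^p e^{ηx} 1_{[0,t]}` and
`z ∈ [0,t]` this integral runs over `[0, t-z]`.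
-/

open MeasureTheory

noncomputable def GammaOp (a b : ℝ) (f : ℝ → ℝ) (z : ℝ) : ℝ :=
  a * ∫ y in Set.Ioi (0:ℝ), f (z + y) * Real.exp (-(b * y))

open Set Real
open scoped Nat

lemma integral_Ioi_pow_mul_exp_neg_mul (k : ℕ) {c : ℝ} (hc : 0 < c) :
    ∫ x in Ioi (0:ℝ), x ^ k * exp (-(c * x)) = k ! / c ^ (k + 1) := by
  have key := integral_rpow_mul_exp_neg_mul_Ioi (a := k + 1) (by positivity) hc
  rw [Gamma_nat_eq_factorial, div_rpow zero_le_one hc.le, one_rpow, ← Nat.cast_add_one,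
    rpow_natCast, one_div_mul_eq_div] at key
  rw [← key]
  refine setIntegral_congr_fun measurableSet_Ioi fun x _ => ?_
  simp [← rpow_natCast]

lemma integrableOn_Ioi_pow_mul_exp_neg_mul (k : ℕ) {c : ℝ} (hc : 0 < c) :
    IntegrableOn (fun x => x ^ k * exp (-(c * x))) (Ioi 0) :=
  .of_integral_ne_zero (by rw [integral_Ioi_pow_mul_exp_neg_mul k hc]; positivity)

lemma integrableOn_Ioi_mul_pow_mul_exp_neg_mul {g : ℝ → ℝ} (hg : AEStronglyMeasurable g)
    {C : ℝ} (hC : ∀ x, ‖g x‖ ≤ C) (k : ℕ) {c : ℝ} (hc : 0 < c) :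
    IntegrableOn (fun x => g x * (x ^ k * exp (-(c * x)))) (Ioi 0) :=
  (integrableOn_Ioi_pow_mul_exp_neg_mul k hc).bdd_mul hg.restrict (ae_of_all _ hC)

lemma integral_Ioo_sub_pow (m : ℕ) (v : ℝ) :
    ∫ y in Ioo 0 v, (v - y) ^ m = (Ioi 0).indicator (fun w : ℝ => w ^ (m + 1) / (m + 1)) v := by
  rcases le_or_gt v 0 with hv | hv
  · simp [Ioo_eq_empty_of_le hv, notMem_Ioi.2 hv]
  · rw [indicator_of_mem (mem_Ioi.2 hv), ← integral_Ioc_eq_integral_Ioo,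
      ← intervalIntegral.integral_of_le hv.le,
      intervalIntegral.integral_comp_sub_left (fun y => y ^ m) v]
    simp [integral_pow]

noncomputable def triangleKernel (g : ℝ → ℝ) (m : ℕ) : ℝ × ℝ → ℝ :=
  {q : ℝ × ℝ | 0 < q.1 ∧ q.1 < q.2}.indicator fun q => g q.2 * (q.2 - q.1) ^ m

namespace triangleKernel

variable {g : ℝ → ℝ} {m : ℕ}

lemma measurable (hg : Measurable g) : Measurable (triangleKernel g m) :=
  ((hg.comp measurable_snd).mul ((measurable_snd.sub measurable_fst).pow_const m)).indicator
    ((measurableSet_lt measurable_const measurable_fst).inter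
      (measurableSet_lt measurable_fst measurable_snd))

lemma section_snd (v : ℝ) :
    (fun y => triangleKernel g m (y, v)) = (Ioo 0 v).indicator fun y => g v * (v - y) ^ m :=
  rfl

lemma integral_fst (y : ℝ) :
    ∫ v, triangleKernel g m (y, v) =
      (Ioi 0).indicator (fun y => ∫ u in Ioi 0, g (y + u) * u ^ m) y := by
  rw [← integral_add_left_eq_self _ y]
  rcases le_or_gt y 0 with hy | hy
  · simp [triangleKernel, hy.not_gt, notMem_Ioi.2 hy]
  · rw [indicator_of_mem (mem_Ioi.2 hy), ← integral_indicator measurableSet_Ioi]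
    congr 1 with u
    simp [triangleKernel, hy, indicator_apply]

lemma integral_snd (v : ℝ) :
    ∫ y, triangleKernel g m (y, v) =
      (Ioi 0).indicator (fun w => g w * (w ^ (m + 1) / (m + 1))) v := by
  rw [indicator_mul_right, section_snd, integral_indicator measurableSet_Ioo, integral_const_mul,
    integral_Ioo_sub_pow]

lemma integral_norm_snd (v : ℝ) :
    ∫ y, ‖triangleKernel g m (y, v)‖ =
      (Ioi 0).indicator (fun w => ‖g w‖ * (w ^ (m + 1) / (m + 1))) v := by
  have hnorm : (fun y => ‖triangleKernel g m (y, v)‖) =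
      (Ioo 0 v).indicator fun y => ‖g v‖ * (v - y) ^ m := by
    ext y
    rw [show triangleKernel g m (y, v) = _ from congrFun (section_snd v) y]
    by_cases hy : y ∈ Ioo 0 v
    · simp [indicator_of_mem hy, abs_of_nonneg (sub_nonneg.2 hy.2.le)]
    · simp [indicator_of_notMem hy]
  rw [indicator_mul_right (f := fun w => ‖g w‖), hnorm, integral_indicator measurableSet_Ioo,
    integral_const_mul, integral_Ioo_sub_pow]

lemma integrable (hg : Measurable g) (hgm : IntegrableOn (fun v => g v * v ^ (m + 1)) (Ioi 0)) :
    Integrable (triangleKernel g m) (volume.prod volume) := by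
  refine (integrable_prod_iff' (measurable hg).aestronglyMeasurable).2
    ⟨ae_of_all _ fun v => ?_, ?_⟩
  · rw [section_snd, integrable_indicator_iff measurableSet_Ioo]
    exact (continuous_const.mul ((continuous_const.sub continuous_id).pow m)).integrableOn_Icc
      |>.mono_set Ioo_subset_Icc_self
  · rw [show (fun v => ∫ y, ‖triangleKernel g m (y, v)‖) = _ from funext integral_norm_snd]
    refine (integrable_indicator_iff measurableSet_Ioi).2
      (IntegrableOn.congr_fun (hgm.norm.div_const (m + 1)) (fun v (hv : 0 < v) => ?_)
        measurableSet_Ioi)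
    rw [norm_mul, norm_pow, norm_of_nonneg hv.le, mul_div_assoc]

end triangleKernel

lemma integral_Ioi_integral_Ioi_add_mul_pow {g : ℝ → ℝ} (hg : Measurable g) (m : ℕ)
    (hgm : IntegrableOn (fun v => g v * v ^ (m + 1)) (Ioi 0)) :
    ∫ y in Ioi (0:ℝ), ∫ u in Ioi (0:ℝ), g (y + u) * u ^ m =
      ∫ v in Ioi (0:ℝ), g v * (v ^ (m + 1) / (m + 1)) := calc
  _ = ∫ y, ∫ v, triangleKernel g m (y, v) := by
      simp_rw [triangleKernel.integral_fst, integral_indicator measurableSet_Ioi]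
  _ = ∫ v, ∫ y, triangleKernel g m (y, v) :=
      integral_integral_swap (triangleKernel.integrable hg hgm)
  _ = _ := by simp_rw [triangleKernel.integral_snd, integral_indicator measurableSet_Ioi]

theorem GammaOp_iterate_succ_apply {f : ℝ → ℝ} (hf : Measurable f) {C : ℝ}
    (hC : ∀ x, ‖f x‖ ≤ C) (a : ℝ) {b : ℝ} (hb : 0 < b) (m : ℕ) (z : ℝ) :
    (GammaOp a b)^[m + 1] f z =
      a ^ (m + 1) / m ! * ∫ u in Ioi 0, f (z + u) * (u ^ m * exp (-(b * u))) := by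
  induction m generalizing z with
  | zero => simp [GammaOp]
  | succ m ih =>
    set g : ℝ → ℝ := fun v => f (z + v) * exp (-(b * v))
    have hg : Measurable g := by fun_prop
    have hgm : IntegrableOn (fun v => g v * v ^ (m + 1)) (Ioi 0) := by
      refine (integrableOn_Ioi_mul_pow_mul_exp_neg_mul (g := fun x => f (z + x))
        (hf.comp (measurable_const_add z)).aestronglyMeasurable (fun x => hC (z + x)) (m + 1)
        hb).congr_fun (fun v _ => ?_) measurableSet_Ioi
      simp only [g]; ring
    have hshift : ∀ y u, g (y + u) * u ^ m =
        exp (-(b * y)) * (f (z + y + u) * (u ^ m * exp (-(b * u)))) := fun y u => by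
      simp only [g, mul_add, neg_add, exp_add, add_assoc]; ring
    have hdiv : ∀ v, g v * (v ^ (m + 1) / (m + 1)) =
        (m + 1 : ℝ)⁻¹ * (f (z + v) * (v ^ (m + 1) * exp (-(b * v)))) := fun v => by
      simp only [g]; ring
    calc (GammaOp a b)^[m + 1 + 1] f z
        = a * ∫ y in Ioi 0, (a ^ (m + 1) / m ! *
            ∫ u in Ioi 0, f (z + y + u) * (u ^ m * exp (-(b * u)))) * exp (-(b * y)) := by
          rw [Function.iterate_succ_apply', GammaOp]
          simp_rw [ih]
      _ = a ^ (m + 2) / m ! * ∫ y in Ioi (0:ℝ), ∫ u in Ioi (0:ℝ), g (y + u) * u ^ m := by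
          simp_rw [hshift, integral_const_mul]
          rw [← integral_const_mul, ← integral_const_mul]
          congr 1 with y
          ring
      _ = a ^ (m + 2) / (m + 1)! * ∫ u in Ioi 0, f (z + u) * (u ^ (m + 1) * exp (-(b * u))) := by
          simp_rw [integral_Ioi_integral_Ioi_add_mul_pow hg m hgm, hdiv, integral_const_mul,
            Nat.factorial_succ, Nat.cast_mul, ← mul_assoc]
          congr 1
          field_simp
          push_cast
          ring

lemma Real.hasSum_pow_div_factorial (x : ℝ) : HasSum (fun n : ℕ => x ^ n / n !) (exp x) := by
  rw [exp_eq_exp_ℝ]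
  exact NormedSpace.expSeries_div_hasSum_exp x

theorem tsum_GammaOp_iterate_succ_apply {f : ℝ → ℝ} (hf : Measurable f) {C : ℝ}
    (hC : ∀ x, ‖f x‖ ≤ C) {a b : ℝ} (hab : |a| < b) (z : ℝ) :
    ∑' m : ℕ, (GammaOp a b)^[m + 1] f z = a * ∫ u in Ioi 0, f (z + u) * exp ((a - b) * u) := by
  have hb : 0 < b := (abs_nonneg a).trans_lt hab
  have hfz : AEStronglyMeasurable fun u => f (z + u) :=
    (hf.comp (measurable_const_add z)).aestronglyMeasurable
  set F : ℕ → ℝ → ℝ := fun m u => a ^ (m + 1) / m ! * (f (z + u) * (u ^ m * exp (-(b * u))))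
  have hF_int : ∀ m, IntegrableOn (F m) (Ioi 0) := fun m =>
    (integrableOn_Ioi_mul_pow_mul_exp_neg_mul hfz (fun u => hC (z + u)) m hb).const_mul _
  have hF_norm : ∀ m, ∫ u in Ioi 0, ‖F m u‖ ≤ C * (|a| / b) ^ (m + 1) := fun m => calc
    ∫ u in Ioi 0, ‖F m u‖
        ≤ ∫ u in Ioi 0, |a| ^ (m + 1) / m ! * C * (u ^ m * exp (-(b * u))) := by
      refine setIntegral_mono_on (hF_int m).norm
        ((integrableOn_Ioi_pow_mul_exp_neg_mul m hb).const_mul _) measurableSet_Ioi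
        fun u (hu : 0 < u) => ?_
      rw [norm_mul, norm_mul, norm_of_nonneg (by positivity : 0 ≤ u ^ m * exp (-(b * u))),
        norm_div, norm_pow, Real.norm_natCast, norm_eq_abs a, ← mul_assoc]
      gcongr
      exact hC _
    _ = C * (|a| / b) ^ (m + 1) := by
      rw [integral_const_mul, integral_Ioi_pow_mul_exp_neg_mul m hb, div_pow]
      field_simp
  have hF_summable : Summable fun m => ∫ u in Ioi 0, ‖F m u‖ := by
    refine .of_nonneg_of_le (fun m => integral_nonneg fun _ => norm_nonneg _) hF_norm ?_
    have hq : |a| / b < 1 := (div_lt_one hb).2 hab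
    exact ((summable_geometric_of_lt_one (by positivity) hq).mul_left (C * (|a| / b))).congr
      fun m => by ring
  have hF_tsum : ∀ u, ∑' m, F m u = a * (f (z + u) * exp ((a - b) * u)) := fun u => by
    have hsum := (hasSum_pow_div_factorial (a * u)).mul_left (a * f (z + u) * exp (-(b * u)))
    refine (hsum.congr_fun fun m => ?_).tsum_eq.trans ?_
    · simp only [F]; ring
    · rw [sub_mul, sub_eq_add_neg, exp_add]; ring
  calc ∑' m : ℕ, (GammaOp a b)^[m + 1] f z = ∑' m, ∫ u in Ioi 0, F m u := by
        simp_rw [GammaOp_iterate_succ_apply hf hC a hb, F, integral_const_mul]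
    _ = ∫ u in Ioi 0, ∑' m, F m u := integral_tsum_of_summable_integral_norm hF_int hF_summable
    _ = a * ∫ u in Ioi 0, f (z + u) * exp ((a - b) * u) := by
        simp_rw [hF_tsum, integral_const_mul]

lemma exists_norm_indicator_le {α E : Type*} [TopologicalSpace α] [SeminormedAddGroup E]
    {s : Set α} (hs : IsCompact s) {g : α → E} (hg : ContinuousOn g s) :
    ∃ C, ∀ x, ‖s.indicator g x‖ ≤ C := by
  obtain ⟨C, hC⟩ := hs.exists_bound_of_continuousOn hg
  refine ⟨max C 0, fun x => ?_⟩
  by_cases hx : x ∈ s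
  · simpa [indicator_of_mem hx] using Or.inl (hC x hx)
  · simp [indicator_of_notMem hx]

lemma setIntegral_Ioi_indicator_Icc_add_mul {g k : ℝ → ℝ} {t z : ℝ} (hz : z ∈ Icc 0 t) :
    ∫ u in Ioi 0, (Icc 0 t).indicator g (z + u) * k u = ∫ u in 0..(t - z), g (z + u) * k u := by
  have hrestrict : ∀ u ∈ Ioi (0:ℝ), (Icc 0 t).indicator g (z + u) * k u =
      (Iic (t - z)).indicator (fun u => g (z + u) * k u) u := fun u (hu : 0 < u) => by
    by_cases hut : u ≤ t - z
    · rw [indicator_of_mem (show z + u ∈ Icc 0 t from ⟨by linarith [hz.1], by linarith⟩),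
        indicator_of_mem (mem_Iic.2 hut)]
    · rw [indicator_of_notMem (fun h => hut (by linarith [h.2])),
        indicator_of_notMem (notMem_Iic.2 (not_le.1 hut)), zero_mul]
  rw [setIntegral_congr_fun measurableSet_Ioi hrestrict, setIntegral_indicator measurableSet_Iic,
    Ioi_inter_Iic, intervalIntegral.integral_of_le (sub_nonneg.2 hz.2)]

theorem neumann_series_exponential_kernel_general (a b η t : ℝ) (p : ℕ)
    (ha : 0 < a) (hab : a < b)
    (z : ℝ) (hz : z ∈ Set.Icc (0:ℝ) t) :
    ∑' m : ℕ,
        (GammaOp a b)^[m + 1]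
          (Set.indicator (Set.Icc (0:ℝ) t) (fun x => x ^ p * Real.exp (η * x))) z =
      a * Real.exp (η * z) *
        ∫ y in (0:ℝ)..(t - z), (z + y) ^ p * Real.exp ((η + a - b) * y) := by
  obtain ⟨C, hC⟩ := exists_norm_indicator_le isCompact_Icc
    (by fun_prop : Continuous fun x : ℝ => x ^ p * exp (η * x)).continuousOn
  have hf : Measurable ((Icc 0 t).indicator fun x : ℝ => x ^ p * exp (η * x)) :=
    (by fun_prop : Measurable fun x : ℝ => x ^ p * exp (η * x)).indicator measurableSet_Icc
  rw [tsum_GammaOp_iterate_succ_apply hf hC (abs_lt.2 ⟨by linarith, hab⟩),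
    setIntegral_Ioi_indicator_Icc_add_mul hz, ← intervalIntegral.integral_const_mul,
    ← intervalIntegral.integral_const_mul]
  congr 1 with y
  rw [mul_add, add_sub_assoc, add_mul, exp_add, exp_add]
  ring

/-- For `0 < a < b`, `η < b` and `f(x) = x^p e^{ηx} 1_{[0,t]}(x)`, the Neumann series
of the exponential-kernel operator `Γ` satisfies, for `z ∈ [0,t]`,
`((I-Γ)⁻¹ Γ f)(z) = ∑_{n ≥ 1} (Γⁿ f)(z) = a e^{ηz} ∫_0^{t-z} (z+y)^p e^{(η+a-b)y} dy`. -/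
theorem neumann_series_exponential_kernel (a b η t : ℝ) (p : ℕ)
    (ha : 0 < a) (hab : a < b) (hη : η < b) (ht : 0 ≤ t)
    (z : ℝ) (hz : z ∈ Set.Icc (0:ℝ) t) :
    ∑' m : ℕ,
        (GammaOp a b)^[m + 1]
          (Set.indicator (Set.Icc (0:ℝ) t) (fun x => x ^ p * Real.exp (η * x))) z =
      a * Real.exp (η * z) *
        ∫ y in (0:ℝ)..(t - z), (z + y) ^ p * Real.exp ((η + a - b) * y) :=
  neumann_series_exponential_kernel_general a b η t p ha hab z hz
end

section
/- For 0 < a < b, the first moment of the Hawkes process with exponential kernel and baseline intensity ν = 1 equals E[X_t] = ∫_0^t κ_z^{(1)} dz = (b^2 t + a(e^{(a-b)t} - bt - 1))/(a-b)^2, where κ_z^{(1)} = b/(b-a) + (a/(a-b)) e^{(a-b)(t-z)}. -/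
open Real intervalIntegral

theorem integral_exp_mul_sub (c t : ℝ) (hc : c ≠ 0) :
    ∫ z in (0:ℝ)..t, exp (c * (t - z)) = (exp (c * t) - 1) / c := by
  have h := integral_comp_sub_left (a := 0) (b := t) (fun x => exp (c * x)) t
  simp only [sub_self, sub_zero] at h
  rw [h, integral_comp_mul_left (fun x => exp x) hc, integral_exp, mul_zero, exp_zero,
    smul_eq_mul, inv_mul_eq_div]

theorem hawkes_first_moment_general (a b t : ℝ) (hab : a < b)
    (EX : ℝ)
    (hE : EX = ∫ z in (0:ℝ)..t,
      (b / (b - a) + a / (a - b) * Real.exp ((a - b) * (t - z)))) :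
    EX = (b ^ 2 * t + a * (Real.exp ((a - b) * t) - b * t - 1)) / (a - b) ^ 2 := by
  have hba : b - a ≠ 0 := sub_ne_zero.mpr hab.ne'
  have hab' : a - b ≠ 0 := sub_ne_zero.mpr hab.ne
  have hexp : IntervalIntegrable (fun z => a / (a - b) * exp ((a - b) * (t - z)))
      MeasureTheory.volume 0 t := Continuous.intervalIntegrable (by fun_prop) _ _
  rw [hE, integral_add intervalIntegrable_const hexp, integral_const, integral_const_mul,
    integral_exp_mul_sub _ _ hab', smul_eq_mul, sub_zero]
  field_simp
  ring

/-- For `0 < a < b`, the first moment of the Hawkes process with exponential kernel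
`a e^{-bx}` and baseline intensity `ν = 1`, given by the cluster representation
`E[X_t] = ∫_0^t κ_z⁽¹⁾ dz` with `κ_z⁽¹⁾ = b/(b-a) + (a/(a-b)) e^{(a-b)(t-z)}`, equals
`(b²t + a(e^{(a-b)t} - bt - 1))/(a-b)²`. -/
theorem hawkes_first_moment (a b t : ℝ) (ha : 0 < a) (hab : a < b) (ht : 0 ≤ t)
    (EX : ℝ)
    (hE : EX = ∫ z in (0:ℝ)..t,
      (b / (b - a) + a / (a - b) * Real.exp ((a - b) * (t - z)))) :
    EX = (b ^ 2 * t + a * (Real.exp ((a - b) * t) - b * t - 1)) / (a - b) ^ 2 :=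
  hawkes_first_moment_general a b t hab EX hE
end
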